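/- Any CVRP solution with m nonempty routes over customers partitioned into N clusters uses at least m + N edges that are penalized (i.e., edges joining different clusters or incident to the depot), with equality if and only if each cluster is visited consecutively by a single vehicle. -/

import Mathlib

/-- Number of adjacent positions in a list whose two entries differ. -/
def countChanges {α : Type*} [DecidableEq α] : List α → ℕ
  | a :: b :: t => (if a = b then 0 else 1) + countChanges (b :: t)
  | _ => 0

/-- Number of penalized edges of a solution: consecutive pairs of visits (on the
closed walks based at the depot `none`) whose endpoints belong to different
clusters or one of whose endpoints is the depot. -/
def penEdgeCount {C : Type*} {N m : ℕ} (clu : C → Fin N) (routes : Fin m → List C) : ℕ :=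
  ∑ i, countChanges (((none : Option (Fin N)) :: (routes i).map (fun v => some (clu v))) ++ [none])

/-- Cluster contiguity: each cluster is visited consecutively by a single vehicle. -/
def ClusterContiguous {C : Type*} {N m : ℕ} (clu : C → Fin N) (routes : Fin m → List C) : Prop :=
  ∀ k : Fin N, ∃ (i : Fin m) (l₁ l₂ l₃ : List C),
    routes i = l₁ ++ l₂ ++ l₃ ∧ ∀ v, v ∈ l₂ ↔ clu v = k

/-!
The penalized edges of a route are the label changes along depot, clusters of the visited
customers, depot. For a nonempty route their number is one more than the number of maximal
blocks of consecutive visits to the same cluster, so the total is `m` plus the number of blocks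
over all routes. Each cluster has at least one block, and exactly one iff it is visited
consecutively by a single vehicle.
-/

section Runs

variable {α : Type*} (p : α → Prop) [DecidablePred p]

/-- The number of maximal blocks of consecutive entries satisfying `p`, each counted at its last
entry. -/
def runs : List α → ℕ
  | [] => 0
  | [a] => if p a then 1 else 0
  | a :: b :: t => (if p a ∧ ¬ p b then 1 else 0) + runs (b :: t)

variable {p}

theorem runs_cons_of_not {a : α} (ha : ¬ p a) : ∀ l : List α, runs p (a :: l) = runs p l
  | [] => by simp [runs, ha]
  | _ :: _ => by simp [runs, ha]

theorem runs_eq_zero_iff : ∀ {l : List α}, runs p l = 0 ↔ ∀ v ∈ l, ¬ p v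
  | [] => by simp [runs]
  | [a] => by by_cases ha : p a <;> simp [runs, ha]
  | a :: b :: t => by
    have ih := runs_eq_zero_iff (l := b :: t)
    by_cases ha : p a <;> by_cases hb : p b <;> simp_all [runs]

theorem runs_append_of_forall_not {l₁ : List α} (h : ∀ v ∈ l₁, ¬ p v) (l : List α) :
    runs p (l₁ ++ l) = runs p l := by
  induction l₁ with
  | nil => rfl
  | cons a t ih =>
    rw [List.cons_append, runs_cons_of_not (h a List.mem_cons_self),
      ih fun v hv => h v (List.mem_cons_of_mem a hv)]

theorem runs_append_eq_one {l₂ l₃ : List α} (hne : l₂ ≠ []) (h₂ : ∀ v ∈ l₂, p v)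
    (h₃ : ∀ v ∈ l₃, ¬ p v) : runs p (l₂ ++ l₃) = 1 := by
  induction l₂ with
  | nil => contradiction
  | cons a t ih =>
    rcases t with _ | ⟨b, t⟩
    · rcases l₃ with _ | ⟨c, l₃⟩
      · simp [runs, h₂ a List.mem_cons_self]
      · simp [runs, h₂ a List.mem_cons_self, h₃ c List.mem_cons_self, runs_eq_zero_iff.2 h₃]
    · have hb : p b := h₂ b (by simp)
      rw [← ih (List.cons_ne_nil b t) fun v hv => h₂ v (List.mem_cons_of_mem a hv)]
      simp [runs, hb]

theorem runs_eq_one_iff {l : List α} :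
    runs p l = 1 ↔ ∃ l₁ l₂ l₃, l = l₁ ++ l₂ ++ l₃ ∧ (∀ v ∈ l₁, ¬ p v) ∧ l₂ ≠ [] ∧
      (∀ v ∈ l₂, p v) ∧ (∀ v ∈ l₃, ¬ p v) := by
  refine ⟨fun h => ?_, ?_⟩
  · induction l with
    | nil => simp [runs] at h
    | cons a l ih =>
      by_cases ha : p a
      · rcases l with _ | ⟨b, t⟩
        · exact ⟨[], [a], [], rfl, by simp, List.cons_ne_nil a [], by simpa using ha, by simp⟩
        by_cases hb : p b
        · obtain ⟨l₁, l₂, l₃, hl, h₁, hne, h₂, h₃⟩ := ih (by simpa [runs, hb] using h)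
          obtain rfl : l₁ = [] := by
            rcases l₁ with _ | ⟨c, l₁⟩
            · rfl
            · obtain ⟨rfl, -⟩ := List.cons.inj hl
              exact absurd hb (h₁ b List.mem_cons_self)
          refine ⟨[], a :: l₂, l₃, by simp [hl], by simp, List.cons_ne_nil a l₂, ?_, h₃⟩
          simpa [ha] using h₂
        · have h₀ : runs p (b :: t) = 0 := by simpa [runs, ha, hb] using h
          exact ⟨[], [a], b :: t, rfl, by simp, List.cons_ne_nil a [], by simpa using ha,
            runs_eq_zero_iff.1 h₀⟩
      · obtain ⟨l₁, l₂, l₃, rfl, h₁, hne, h₂, h₃⟩ := ih (runs_cons_of_not ha l ▸ h)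
        refine ⟨a :: l₁, l₂, l₃, rfl, ?_, hne, h₂, h₃⟩
        simpa [ha] using h₁
  · rintro ⟨l₁, l₂, l₃, rfl, h₁, hne, h₂, h₃⟩
    rw [List.append_assoc, runs_append_of_forall_not h₁, runs_append_eq_one hne h₂ h₃]

theorem runs_eq_one_of_nodup {l₁ l₂ l₃ : List α} (hnd : (l₁ ++ l₂ ++ l₃).Nodup) (hne : l₂ ≠ [])
    (h : ∀ v, v ∈ l₂ ↔ p v) : runs p (l₁ ++ l₂ ++ l₃) = 1 := by
  have h₁₂ := List.disjoint_of_nodup_append hnd.of_append_left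
  have h₂₃ := List.disjoint_of_nodup_append (List.append_assoc l₁ l₂ l₃ ▸ hnd).of_append_right
  exact runs_eq_one_iff.2 ⟨l₁, l₂, l₃, rfl, fun v hv hp => h₁₂ hv ((h v).2 hp), hne,
    fun v => (h v).1, fun v hv hp => h₂₃ ((h v).2 hp) hv⟩

end Runs

theorem sum_runs_eq_countChanges_add_one {α β : Type*} [Fintype β] [DecidableEq β] (f : α → β) :
    ∀ l : List α, l ≠ [] → ∑ b, runs (fun a => f a = b) l = countChanges (l.map f) + 1
  | [a], _ => by simp [runs, countChanges]
  | a :: b :: t, _ => by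
    have hstep : ∑ k, (if f a = k ∧ ¬ f b = k then 1 else 0) = if f a = f b then 0 else 1 := by
      simp [ite_and, eq_comm]
    simp only [runs, Finset.sum_add_distrib, hstep,
      sum_runs_eq_countChanges_add_one f (b :: t) (List.cons_ne_nil b t), List.map_cons,
      countChanges]
    ring

theorem countChanges_map_some_append_none {α : Type*} [DecidableEq α] :
    ∀ l : List α, l ≠ [] → countChanges (l.map some ++ [none]) = countChanges l + 1
  | [a], _ => by simp [countChanges]
  | a :: b :: t, _ => by
    have ih := countChanges_map_some_append_none (b :: t) (List.cons_ne_nil b t)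
    simp only [List.map_cons, List.cons_append, countChanges, Option.some.injEq] at ih ⊢
    omega

theorem countChanges_depot {α : Type*} [DecidableEq α] {l : List α} (hl : l ≠ []) :
    countChanges ((none :: l.map some) ++ [none]) = countChanges l + 2 := by
  obtain ⟨a, t, rfl⟩ := List.exists_cons_of_ne_nil hl
  rw [List.map_cons, List.cons_append, List.cons_append, countChanges, ← List.cons_append,
    ← List.map_cons, countChanges_map_some_append_none _ hl]
  simp only [reduceCtorEq, if_false]
  omega

theorem Finset.eq_of_sum_eq_one {ι : Type*} [DecidableEq ι] {s : Finset ι} {f : ι → ℕ}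
    (h : ∑ i ∈ s, f i = 1) {i j : ι} (hi : i ∈ s) (hj : j ∈ s) (hfi : f i ≠ 0) (hfj : f j ≠ 0) :
    i = j := by
  by_contra hij
  have := Finset.sum_le_sum_of_subset (f := f)
    (Finset.insert_subset hi (Finset.singleton_subset_iff.2 hj))
  rw [Finset.sum_pair hij] at this
  omega

section Clusters

variable {C : Type*} {N m : ℕ} (clu : C → Fin N) (routes : Fin m → List C)

def clusterRuns (k : Fin N) : ℕ :=
  ∑ i, runs (fun v => clu v = k) (routes i)

theorem penEdgeCount_eq_add_sum_clusterRuns (hne : ∀ i, routes i ≠ []) :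
    penEdgeCount clu routes = m + ∑ k, clusterRuns clu routes k := by
  have hroute (i : Fin m) : countChanges (((none : Option (Fin N)) ::
      (routes i).map (fun v => some (clu v))) ++ [none]) =
      ∑ k, runs (fun v => clu v = k) (routes i) + 1 := by
    rw [show (routes i).map (fun v => some (clu v)) = ((routes i).map clu).map some by simp,
      countChanges_depot (by simpa using hne i),
      sum_runs_eq_countChanges_add_one clu _ (hne i)]
  simp only [penEdgeCount, clusterRuns, hroute, Finset.sum_add_distrib,
    Finset.sum_comm (γ := Fin N)]
  simp [add_comm]

variable {clu routes}

theorem one_le_clusterRuns {k : Fin N} (hk : ∃ v, clu v = k)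
    (hcover : ∀ v, ∃ i, v ∈ routes i) : 1 ≤ clusterRuns clu routes k := by
  obtain ⟨v, hv⟩ := hk
  obtain ⟨i, hi⟩ := hcover v
  calc 1 ≤ runs (fun v => clu v = k) (routes i) :=
        Nat.one_le_iff_ne_zero.2 fun h => runs_eq_zero_iff.1 h v hi hv
    _ ≤ clusterRuns clu routes k :=
        Finset.single_le_sum (f := fun i => runs (fun v => clu v = k) (routes i))
          (fun _ _ => Nat.zero_le _) (Finset.mem_univ i)

theorem clusterRuns_eq_one_iff {k : Fin N} (hk : ∃ v, clu v = k)
    (hvisit : ∀ v, ∃! i, v ∈ routes i) (hnodup : ∀ i, (routes i).Nodup) :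
    clusterRuns clu routes k = 1 ↔ ∃ (i : Fin m) (l₁ l₂ l₃ : List C),
      routes i = l₁ ++ l₂ ++ l₃ ∧ ∀ v, v ∈ l₂ ↔ clu v = k := by
  constructor
  · intro h
    obtain ⟨i, -, hi⟩ := Finset.exists_ne_zero_of_sum_ne_zero (h ▸ one_ne_zero)
    have hi₁ : runs (fun v => clu v = k) (routes i) = 1 := by
      have := Finset.single_le_sum (f := fun i => runs (fun v => clu v = k) (routes i))
        (fun _ _ => Nat.zero_le _) (Finset.mem_univ i)
      unfold clusterRuns at h
      omega
    obtain ⟨l₁, l₂, l₃, hl, h₁, -, h₂, h₃⟩ := runs_eq_one_iff.1 hi₁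
    refine ⟨i, l₁, l₂, l₃, hl, fun v => ⟨h₂ v, fun hv => ?_⟩⟩
    obtain ⟨j, hj, -⟩ := hvisit v
    obtain rfl : j = i := Finset.eq_of_sum_eq_one h (Finset.mem_univ j) (Finset.mem_univ i)
      (fun h₀ => runs_eq_zero_iff.1 h₀ v hj hv) hi
    rw [hl, List.mem_append, List.mem_append] at hj
    rcases hj with (hj | hj) | hj
    exacts [absurd hv (h₁ v hj), hj, absurd hv (h₃ v hj)]
  · rintro ⟨i, l₁, l₂, l₃, hl, hmem⟩
    obtain ⟨v, hv⟩ := hk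
    have hi : runs (fun v => clu v = k) (routes i) = 1 := by
      rw [hl]
      exact runs_eq_one_of_nodup (hl ▸ hnodup i) (List.ne_nil_of_mem ((hmem v).2 hv)) hmem
    have hj (j : Fin m) (hji : j ≠ i) : runs (fun v => clu v = k) (routes j) = 0 :=
      runs_eq_zero_iff.2 fun w hw hwk => hji <| (hvisit w).unique hw <| by
        rw [hl]
        exact List.mem_append_left _ (List.mem_append_right _ ((hmem w).2 hwk))
    rw [clusterRuns, Finset.sum_eq_single i (fun j _ => hj j) (by simp), hi]

end Clusters

/-- Any CVRP solution with `m` nonempty routes over customers partitioned into `N`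
clusters uses at least `m + N` penalized edges, with equality iff each cluster is
visited consecutively by a single vehicle. -/
theorem penEdgeCount_lower_bound {C : Type*} {N m : ℕ} (clu : C → Fin N)
    (hsurj : Function.Surjective clu)
    (routes : Fin m → List C)
    (hvisit : ∀ v : C, ∃! i : Fin m, v ∈ routes i)
    (hnodup : ∀ i, (routes i).Nodup)
    (hne : ∀ i, routes i ≠ []) :
    m + N ≤ penEdgeCount clu routes ∧
    (penEdgeCount clu routes = m + N ↔ ClusterContiguous clu routes) := by
  have hone (k : Fin N) : 1 ≤ clusterRuns clu routes k :=
    one_le_clusterRuns (hsurj k) fun v => (hvisit v).exists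
  rw [penEdgeCount_eq_add_sum_clusterRuns clu routes hne]
  have hN : N ≤ ∑ k, clusterRuns clu routes k := by
    simpa using Finset.card_nsmul_le_sum Finset.univ _ 1 fun k _ => hone k
  refine ⟨by omega, ?_⟩
  calc m + ∑ k, clusterRuns clu routes k = m + N
      ↔ ∑ _k : Fin N, 1 = ∑ k, clusterRuns clu routes k := by simp [eq_comm]
    _ ↔ ∀ k, clusterRuns clu routes k = 1 :=
      (Finset.sum_eq_sum_iff_of_le fun k _ => hone k).trans (by simp [eq_comm])
    _ ↔ ClusterContiguous clu routes :=
      forall_congr' fun k => clusterRuns_eq_one_iff (hsurj k) hvisit hnodup
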